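/- Let $(\mathcal{A},[~,~]_\mathcal{A},N_\mathcal{A})$ and $(\mathcal{A}',[~,~]_{\mathcal{A}'},N_{\mathcal{A}'})$ be Nijenhuis mock-Lie algebras with linear maps $\rho_\mathcal{A}:\mathcal{A}\to End(\mathcal{A}')$, $\rho_{\mathcal{A}'}:\mathcal{A}'\to End(\mathcal{A})$. Define on $\mathcal{A}\oplus\mathcal{A}'$ the bracket $[(a+x),(b+y)]_\diamond = [a,b]_\mathcal{A} + \rho_{\mathcal{A}'}(y)a + \rho_{\mathcal{A}'}(x)b + [x,y]_{\mathcal{A}'} + \rho_\mathcal{A}(a)y + \rho_\mathcal{A}(b)x$ and the map $(N_\mathcal{A}+N_{\mathcal{A}'})(a+x)=N_\mathcal{A}(a)+N_{\mathcal{A}'}(x)$. Then $(\mathcal{A}\oplus\mathcal{A}',[~,~]_\diamond,N_\mathcal{A}+N_{\mathcal{A}'})$ is a Nijenhuis mock-Lie algebra if and only if $((\mathcal{A},N_\mathcal{A}),(\mathcal{A}',N_{\mathcal{A}'}),\rho_\mathcal{A},\rho_{\mathcal{A}'})$ is a matched pair of Nijenhuis mock-Lie algebras. -/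

import Mathlib

/-! The bracket `⋄` and `N_A + N_{A'}` are symmetric under exchanging the two summands together
with `ρ_A` and `ρ_{A'}`, so every identity on `A ⊕ A'` splits into an `A`-component and an
`A'`-component, the latter being the former for the exchanged data. Evaluated on elements
`(a, 0)`, `(0, x)`, the `A`-component of the Jacobi (resp. Nijenhuis) identity is exactly the
representation and compatibility conditions involving `ρ_{A'}`; conversely, these conditions and
the identities of `A` give it back by multilinear expansion. Commutativity of `⋄` is automatic. -/

/-- The bracket `[(a+x),(b+y)]_⋄` on `A ⊕ A'` built from two brackets and two actions. -/
def diamondBracket {K A A' : Type*} [Field K] [AddCommGroup A] [Module K A]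
    [AddCommGroup A'] [Module K A']
    (bA : A →ₗ[K] A →ₗ[K] A) (bA' : A' →ₗ[K] A' →ₗ[K] A')
    (ρA : A →ₗ[K] A' →ₗ[K] A') (ρA' : A' →ₗ[K] A →ₗ[K] A)
    (p q : A × A') : A × A' :=
  (bA p.1 q.1 + ρA' q.2 p.1 + ρA' p.2 q.1,
   bA' p.2 q.2 + ρA p.1 q.2 + ρA q.1 p.2)

/-- `(N_A + N_{A'})(a + x) = N_A(a) + N_{A'}(x)`. -/
def sumMap {K A A' : Type*} [Field K] [AddCommGroup A] [Module K A]
    [AddCommGroup A'] [Module K A']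
    (NA : A →ₗ[K] A) (NA' : A' →ₗ[K] A') (p : A × A') : A × A' :=
  (NA p.1, NA' p.2)

section MockLie

variable {M : Type*} [AddCommGroup M]

def jacobiator (br : M → M → M) (p q r : M) : M :=
  br p (br q r) + br q (br r p) + br r (br p q)

def nijenhuisDefect (br : M → M → M) (N : M → M) (p q : M) : M :=
  br (N p) (N q) + N (N (br p q)) - (N (br (N p) q) + N (br p (N q)))

end MockLie

section MatchedPair

variable {K A V : Type*} [CommRing K] [AddCommGroup A] [Module K A]
  [AddCommGroup V] [Module K V]

def IsMockLieRep (b : A →ₗ[K] A →ₗ[K] A) (ρ : A →ₗ[K] V →ₗ[K] V) : Prop :=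
  ∀ a c x, ρ (b a c) x = -ρ a (ρ c x) - ρ c (ρ a x)

def MatchedCompatible (bV : V →ₗ[K] V →ₗ[K] V) (ρ : A →ₗ[K] V →ₗ[K] V)
    (σ : V →ₗ[K] A →ₗ[K] A) : Prop :=
  ∀ a x y, ρ a (bV x y) + bV (ρ a x) y + bV x (ρ a y) + ρ (σ y a) x + ρ (σ x a) y = 0

def IsNijenhuisRep (NA : A →ₗ[K] A) (ρ : A →ₗ[K] V →ₗ[K] V) (NV : V →ₗ[K] V) : Prop :=
  ∀ a x, ρ (NA a) (NV x) + NV (NV (ρ a x)) = NV (ρ (NA a) x) + NV (ρ a (NV x))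

end MatchedPair

section Diamond

variable {K A A' : Type*} [Field K] [AddCommGroup A] [Module K A]
  [AddCommGroup A'] [Module K A']
  (bA : A →ₗ[K] A →ₗ[K] A) (bA' : A' →ₗ[K] A' →ₗ[K] A')
  (ρA : A →ₗ[K] A' →ₗ[K] A') (ρA' : A' →ₗ[K] A →ₗ[K] A)
  (NA : A →ₗ[K] A) (NA' : A' →ₗ[K] A')

local notation "D" => diamondBracket bA bA' ρA ρA'

lemma diamondBracket_comm (hcommA : ∀ a c : A, bA a c = bA c a)
    (hcommA' : ∀ x y : A', bA' x y = bA' y x) (p q : A × A') : D p q = D q p := by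
  simp only [diamondBracket, hcommA p.1, hcommA' p.2]
  congr 1 <;> abel

lemma diamondBracket_swap (p q : A × A') :
    diamondBracket bA' bA ρA' ρA p.swap q.swap = (D p q).swap := by
  simp only [diamondBracket, Prod.fst_swap, Prod.snd_swap, Prod.swap_prod_mk]
  congr 1 <;> abel

lemma jacobiator_diamondBracket_swap (p q r : A × A') :
    jacobiator (diamondBracket bA' bA ρA' ρA) p.swap q.swap r.swap =
      (jacobiator D p q r).swap := by
  simp only [jacobiator, diamondBracket_swap, Prod.swap_add]

lemma nijenhuisDefect_diamondBracket_swap (p q : A × A') :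
    nijenhuisDefect (diamondBracket bA' bA ρA' ρA) (sumMap NA' NA) p.swap q.swap =
      (nijenhuisDefect D (sumMap NA NA') p q).swap := by
  have hN : ∀ p : A × A', sumMap NA' NA p.swap = (sumMap NA NA' p).swap := fun _ => rfl
  simp only [nijenhuisDefect, hN, diamondBracket_swap, Prod.swap_add, Prod.swap_sub]

lemma jacobiator_diamondBracket_fst_eq_zero_iff (hcommA : ∀ a c : A, bA a c = bA c a)
    (hjacA : ∀ a b c : A, bA a (bA b c) + bA b (bA c a) + bA c (bA a b) = 0) :
    (∀ p q r, (jacobiator D p q r).1 = 0) ↔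
      IsMockLieRep bA' ρA' ∧ MatchedCompatible bA ρA' ρA := by
  constructor
  · intro h
    refine ⟨fun x y a => ?_, fun x a c => ?_⟩
    · have h' := h (0, x) (0, y) (a, 0)
      simp only [jacobiator, diamondBracket, map_zero, LinearMap.zero_apply, add_zero, zero_add,
        Prod.mk_add_mk] at h'
      linear_combination (norm := abel1) h'
    · have h' := h (a, 0) (c, 0) (0, x)
      simp only [jacobiator, diamondBracket, map_zero, LinearMap.zero_apply, add_zero, zero_add,
        Prod.mk_add_mk] at h'
      linear_combination (norm := abel1) h' + hcommA (ρA' x a) c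
  · rintro ⟨hrep, hcompat⟩ ⟨a, x⟩ ⟨b, y⟩ ⟨c, z⟩
    simp only [jacobiator, diamondBracket, map_add, LinearMap.add_apply, Prod.fst_add]
    linear_combination (norm := abel1) hjacA a b c + hcompat x b c + hcompat y c a +
      hcompat z a b + hrep y z a + hrep z x b + hrep x y c -
      hcommA (ρA' x b) c - hcommA (ρA' y c) a - hcommA (ρA' z a) b

lemma nijenhuisDefect_diamondBracket_fst_eq_zero_iff
    (hNA : ∀ a c : A, bA (NA a) (NA c) + NA (NA (bA a c)) = NA (bA (NA a) c) + NA (bA a (NA c))) :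
    (∀ p q, (nijenhuisDefect D (sumMap NA NA') p q).1 = 0) ↔ IsNijenhuisRep NA' ρA' NA := by
  constructor
  · intro h x a
    have h' := h (a, 0) (0, x)
    simp only [nijenhuisDefect, diamondBracket, sumMap, map_zero, LinearMap.zero_apply, add_zero,
      zero_add, Prod.mk_add_mk, Prod.mk_sub_mk] at h'
    linear_combination (norm := abel1) h'
  · rintro hrep ⟨a, x⟩ ⟨b, y⟩
    simp only [nijenhuisDefect, diamondBracket, sumMap, map_add, Prod.fst_add, Prod.fst_sub]
    linear_combination (norm := abel1) hNA a b + hrep x b + hrep y a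

lemma jacobiator_diamondBracket_eq_zero_iff (hcommA : ∀ a c : A, bA a c = bA c a)
    (hjacA : ∀ a b c : A, bA a (bA b c) + bA b (bA c a) + bA c (bA a b) = 0)
    (hcommA' : ∀ x y : A', bA' x y = bA' y x)
    (hjacA' : ∀ x y z : A', bA' x (bA' y z) + bA' y (bA' z x) + bA' z (bA' x y) = 0) :
    (∀ p q r, jacobiator D p q r = 0) ↔
      IsMockLieRep bA ρA ∧ IsMockLieRep bA' ρA' ∧
        MatchedCompatible bA' ρA ρA' ∧ MatchedCompatible bA ρA' ρA := by
  have hsnd : (∀ p q r, (jacobiator D p q r).2 = 0) ↔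
      IsMockLieRep bA ρA ∧ MatchedCompatible bA' ρA ρA' := by
    rw [← jacobiator_diamondBracket_fst_eq_zero_iff bA' bA ρA' ρA hcommA' hjacA',
      Prod.swap_surjective.forall₃]
    simp only [jacobiator_diamondBracket_swap, Prod.snd_swap]
  simp only [Prod.ext_iff, forall_and, Prod.fst_zero, Prod.snd_zero,
    jacobiator_diamondBracket_fst_eq_zero_iff bA bA' ρA ρA' hcommA hjacA, hsnd]
  tauto

lemma nijenhuisDefect_diamondBracket_eq_zero_iff
    (hNA : ∀ a c : A, bA (NA a) (NA c) + NA (NA (bA a c)) = NA (bA (NA a) c) + NA (bA a (NA c)))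
    (hNA' : ∀ x y : A',
      bA' (NA' x) (NA' y) + NA' (NA' (bA' x y)) = NA' (bA' (NA' x) y) + NA' (bA' x (NA' y))) :
    (∀ p q, nijenhuisDefect D (sumMap NA NA') p q = 0) ↔
      IsNijenhuisRep NA ρA NA' ∧ IsNijenhuisRep NA' ρA' NA := by
  have hsnd : (∀ p q, (nijenhuisDefect D (sumMap NA NA') p q).2 = 0) ↔
      IsNijenhuisRep NA ρA NA' := by
    rw [← nijenhuisDefect_diamondBracket_fst_eq_zero_iff bA' bA ρA' ρA NA' NA hNA',
      Prod.swap_surjective.forall₂]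
    simp only [nijenhuisDefect_diamondBracket_swap, Prod.snd_swap]
  simp only [Prod.ext_iff, forall_and, Prod.fst_zero, Prod.snd_zero,
    nijenhuisDefect_diamondBracket_fst_eq_zero_iff bA bA' ρA ρA' NA NA' hNA, hsnd]
  tauto

end Diamond

theorem stmt12_general {K A A' : Type*} [Field K]
    [AddCommGroup A] [Module K A] [AddCommGroup A'] [Module K A']
    (bA : A →ₗ[K] A →ₗ[K] A) (bA' : A' →ₗ[K] A' →ₗ[K] A')
    (NA : A →ₗ[K] A) (NA' : A' →ₗ[K] A')
    (ρA : A →ₗ[K] A' →ₗ[K] A') (ρA' : A' →ₗ[K] A →ₗ[K] A)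
    (hcommA : ∀ x y : A, bA x y = bA y x)
    (hjacA : ∀ x y z : A, bA x (bA y z) + bA y (bA z x) + bA z (bA x y) = 0)
    (hNA : ∀ x y : A,
      bA (NA x) (NA y) + NA (NA (bA x y)) = NA (bA (NA x) y) + NA (bA x (NA y)))
    (hcommA' : ∀ x y : A', bA' x y = bA' y x)
    (hjacA' : ∀ x y z : A', bA' x (bA' y z) + bA' y (bA' z x) + bA' z (bA' x y) = 0)
    (hNA' : ∀ x y : A',
      bA' (NA' x) (NA' y) + NA' (NA' (bA' x y)) =
        NA' (bA' (NA' x) y) + NA' (bA' x (NA' y))) :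
    ((∀ p q : A × A',
        diamondBracket bA bA' ρA ρA' p q = diamondBracket bA bA' ρA ρA' q p) ∧
     (∀ p q r : A × A',
        diamondBracket bA bA' ρA ρA' p (diamondBracket bA bA' ρA ρA' q r) +
        diamondBracket bA bA' ρA ρA' q (diamondBracket bA bA' ρA ρA' r p) +
        diamondBracket bA bA' ρA ρA' r (diamondBracket bA bA' ρA ρA' p q) = 0) ∧
     (∀ p q : A × A',
        diamondBracket bA bA' ρA ρA' (sumMap NA NA' p) (sumMap NA NA' q) +
          sumMap NA NA' (sumMap NA NA' (diamondBracket bA bA' ρA ρA' p q)) =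
        sumMap NA NA' (diamondBracket bA bA' ρA ρA' (sumMap NA NA' p) q) +
          sumMap NA NA' (diamondBracket bA bA' ρA ρA' p (sumMap NA NA' q)))) ↔
    ((∀ (a c : A) (x : A'), ρA (bA a c) x = - ρA a (ρA c x) - ρA c (ρA a x)) ∧
     (∀ (x y : A') (a : A), ρA' (bA' x y) a = - ρA' x (ρA' y a) - ρA' y (ρA' x a)) ∧
     (∀ (a : A) (x y : A'),
        ρA a (bA' x y) + bA' (ρA a x) y + bA' x (ρA a y) +
          ρA (ρA' y a) x + ρA (ρA' x a) y = 0) ∧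
     (∀ (x : A') (a c : A),
        ρA' x (bA a c) + bA (ρA' x a) c + bA a (ρA' x c) +
          ρA' (ρA c x) a + ρA' (ρA a x) c = 0) ∧
     (∀ (a : A) (x : A'),
        ρA (NA a) (NA' x) + NA' (NA' (ρA a x)) =
          NA' (ρA (NA a) x) + NA' (ρA a (NA' x))) ∧
     (∀ (x : A') (a : A),
        ρA' (NA' x) (NA a) + NA (NA (ρA' x a)) =
          NA (ρA' (NA' x) a) + NA (ρA' x (NA a)))) := by
  have hjac := jacobiator_diamondBracket_eq_zero_iff bA bA' ρA ρA' hcommA hjacA hcommA' hjacA'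
  have hnij := nijenhuisDefect_diamondBracket_eq_zero_iff bA bA' ρA ρA' NA NA' hNA hNA'
  simp only [jacobiator, nijenhuisDefect, sub_eq_zero] at hjac hnij
  rw [iff_true_intro (diamondBracket_comm bA bA' ρA ρA' hcommA hcommA'), true_and, hjac, hnij,
    and_assoc, and_assoc, and_assoc]
  rfl

/-- `(A ⊕ A', [,]_⋄, N_A + N_{A'})` is a Nijenhuis mock-Lie algebra iff
`((A,N_A),(A',N_{A'}),ρ_A,ρ_{A'})` is a matched pair of Nijenhuis mock-Lie algebras. -/
theorem stmt12 {K A A' : Type*} [Field K] [CharZero K]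
    [AddCommGroup A] [Module K A] [AddCommGroup A'] [Module K A']
    (bA : A →ₗ[K] A →ₗ[K] A) (bA' : A' →ₗ[K] A' →ₗ[K] A')
    (NA : A →ₗ[K] A) (NA' : A' →ₗ[K] A')
    (ρA : A →ₗ[K] A' →ₗ[K] A') (ρA' : A' →ₗ[K] A →ₗ[K] A)
    (hcommA : ∀ x y : A, bA x y = bA y x)
    (hjacA : ∀ x y z : A, bA x (bA y z) + bA y (bA z x) + bA z (bA x y) = 0)
    (hNA : ∀ x y : A,
      bA (NA x) (NA y) + NA (NA (bA x y)) = NA (bA (NA x) y) + NA (bA x (NA y)))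
    (hcommA' : ∀ x y : A', bA' x y = bA' y x)
    (hjacA' : ∀ x y z : A', bA' x (bA' y z) + bA' y (bA' z x) + bA' z (bA' x y) = 0)
    (hNA' : ∀ x y : A',
      bA' (NA' x) (NA' y) + NA' (NA' (bA' x y)) =
        NA' (bA' (NA' x) y) + NA' (bA' x (NA' y))) :
    ((∀ p q : A × A',
        diamondBracket bA bA' ρA ρA' p q = diamondBracket bA bA' ρA ρA' q p) ∧
     (∀ p q r : A × A',
        diamondBracket bA bA' ρA ρA' p (diamondBracket bA bA' ρA ρA' q r) +
        diamondBracket bA bA' ρA ρA' q (diamondBracket bA bA' ρA ρA' r p) +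
        diamondBracket bA bA' ρA ρA' r (diamondBracket bA bA' ρA ρA' p q) = 0) ∧
     (∀ p q : A × A',
        diamondBracket bA bA' ρA ρA' (sumMap NA NA' p) (sumMap NA NA' q) +
          sumMap NA NA' (sumMap NA NA' (diamondBracket bA bA' ρA ρA' p q)) =
        sumMap NA NA' (diamondBracket bA bA' ρA ρA' (sumMap NA NA' p) q) +
          sumMap NA NA' (diamondBracket bA bA' ρA ρA' p (sumMap NA NA' q)))) ↔
    ((∀ (a c : A) (x : A'), ρA (bA a c) x = - ρA a (ρA c x) - ρA c (ρA a x)) ∧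
     (∀ (x y : A') (a : A), ρA' (bA' x y) a = - ρA' x (ρA' y a) - ρA' y (ρA' x a)) ∧
     (∀ (a : A) (x y : A'),
        ρA a (bA' x y) + bA' (ρA a x) y + bA' x (ρA a y) +
          ρA (ρA' y a) x + ρA (ρA' x a) y = 0) ∧
     (∀ (x : A') (a c : A),
        ρA' x (bA a c) + bA (ρA' x a) c + bA a (ρA' x c) +
          ρA' (ρA c x) a + ρA' (ρA a x) c = 0) ∧
     (∀ (a : A) (x : A'),
        ρA (NA a) (NA' x) + NA' (NA' (ρA a x)) =
          NA' (ρA (NA a) x) + NA' (ρA a (NA' x))) ∧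
     (∀ (x : A') (a : A),
        ρA' (NA' x) (NA a) + NA (NA (ρA' x a)) =
          NA (ρA' (NA' x) a) + NA (ρA' x (NA a)))) :=
  stmt12_general bA bA' NA NA' ρA ρA' hcommA hjacA hNA hcommA' hjacA' hNA'
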